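/- arXiv:2201.11484 — 4 statements merged into one kernel-verified Lean document; each statement's English description precedes it below -/
import Mathlib

section
/- If a finite union-closed family F of subsets of a finite set X contains a set S of size 2, then some element of S belongs to at least half of the sets in F. -/
def UnionClosed {α : Type*} [DecidableEq α] (F : Finset (Finset α)) : Prop :=
  ∀ A ∈ F, ∀ B ∈ F, A ∪ B ∈ F

/-- Sarvate–Renaud: if a finite union-closed family `F` contains a set `S` of size 2,
then some element of `S` belongs to at least half of the sets in `F`. -/
theorem pair_in_union_closed_half {α : Type*} [DecidableEq α]
    (F : Finset (Finset α)) (hF : UnionClosed F) (S : Finset α)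
    (hS : S ∈ F) (hScard : S.card = 2) :
    ∃ x ∈ S, F.card ≤ 2 * (F.filter (fun A => x ∈ A)).card := by
  obtain ⟨a, b, hab, rfl⟩ := Finset.card_eq_two.mp hScard
  -- injection from "neither" into "both"
  have hneither : (F.filter (fun A => ¬(a ∈ A ∨ b ∈ A))).card ≤
      (F.filter (fun A => a ∈ A ∧ b ∈ A)).card := by
    apply Finset.card_le_card_of_injOn (fun A => A ∪ {a, b})
    · intro A hA
      simp only [Finset.mem_coe, Finset.mem_filter] at hA ⊢
      refine ⟨hF A hA.1 _ hS, ?_, ?_⟩ <;> simp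
    · intro A hA B hB hABeq
      simp only [Finset.coe_filter, Set.mem_setOf_eq, not_or] at hA hB
      have : ∀ C : Finset α, a ∉ C → b ∉ C → (C ∪ {a, b}) \ {a, b} = C := by
        intro C hc1 hc2
        ext x
        simp only [Finset.mem_sdiff, Finset.mem_union, Finset.mem_insert,
          Finset.mem_singleton]
        constructor
        · rintro ⟨h1 | h1, h2⟩
          · exact h1
          · exact absurd h1 h2
        · intro hx
          refine ⟨Or.inl hx, ?_⟩
          rintro (rfl | rfl) <;> [exact hc1 hx; exact hc2 hx]
      calc A = (A ∪ {a, b}) \ {a, b} := (this A hA.2.1 hA.2.2).symm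
        _ = (B ∪ {a, b}) \ {a, b} := by simp only at hABeq; rw [hABeq]
        _ = B := this B hB.2.1 hB.2.2
  have hboth_a : (F.filter (fun A => a ∈ A ∧ b ∈ A)).card ≤ (F.filter (fun A => a ∈ A)).card := by
    apply Finset.card_le_card
    intro A hA
    simp only [Finset.mem_filter] at hA ⊢
    exact ⟨hA.1, hA.2.1⟩
  have hsplit : F.card = (F.filter (fun A => a ∈ A ∨ b ∈ A)).card +
      (F.filter (fun A => ¬(a ∈ A ∨ b ∈ A))).card :=
    (Finset.card_filter_add_card_filter_not _).symm
  have hunion : (F.filter (fun A => a ∈ A ∨ b ∈ A)).card +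
      (F.filter (fun A => a ∈ A ∧ b ∈ A)).card =
      (F.filter (fun A => a ∈ A)).card + (F.filter (fun A => b ∈ A)).card := by
    rw [Finset.filter_or, Finset.filter_and]
    exact Finset.card_union_add_card_inter _ _
  rcases le_total (F.filter (fun A => b ∈ A)).card (F.filter (fun A => a ∈ A)).card with h | h
  · exact ⟨a, by simp, by omega⟩
  · exact ⟨b, by simp, by omega⟩
end

section
/- Let k > t be positive integers, q a positive integer, and set d = C(k-1, t-1)·q^t. Then there exists a set X of size dk/t = C(k,t)·q^t and a family A₁, ..., A_k of d-element subsets of X such that every element of X is contained in exactly t of the sets A_i, and for every 2 ≤ r ≤ t and every choice of indices 1 ≤ i₁ < i₂ < ... < i_r ≤ k, the intersection A_{i₁} ∩ ... ∩ A_{i_r} has size d·(t-1)(t-2)···(t-r+1) / ((k-1)(k-2)···(k-r+1)). -/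
open Finset

private lemma prod_Icc_sub (t R : ℕ) :
    ∏ j ∈ Finset.Icc 1 R, (t - j) = (t - 1).descFactorial R := by
  induction R with
  | zero => simp
  | succ R ih =>
    rw [Finset.prod_Icc_succ_top (Nat.le_add_left 1 R), ih, Nat.descFactorial_succ, mul_comm]
    congr 1
    omega

private lemma arith_id (K T R : ℕ) (hRT : R ≤ T) (hTK : T ≤ K) :
    (K - R).choose (T - R) * K.descFactorial R = K.choose T * T.descFactorial R := by
  rw [Nat.descFactorial_eq_factorial_mul_choose, Nat.descFactorial_eq_factorial_mul_choose]
  calc (K - R).choose (T - R) * (Nat.factorial R * K.choose R)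
      = Nat.factorial R * (K.choose R * (K - R).choose (T - R)) := by ring
    _ = Nat.factorial R * (K.choose T * T.choose R) := by rw [← Nat.choose_mul (n := K) hRT]
    _ = K.choose T * (Nat.factorial R * T.choose R) := by ring

private lemma count_supersets {α : Type*} [DecidableEq α] (s J : Finset α) (t : ℕ)
    (hJs : J ⊆ s) (hJt : J.card ≤ t) :
    ((s.powersetCard t).filter (fun S => J ⊆ S)).card
      = (s.card - J.card).choose (t - J.card) := by
  rw [← Finset.card_sdiff_of_subset hJs, ← Finset.card_powersetCard (t - J.card) (s \ J)]
  refine Finset.card_bij' (fun S _ => S \ J) (fun T _ => T ∪ J) ?_ ?_ ?_ ?_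
  · intro S hS
    simp only [Finset.mem_filter, Finset.mem_powersetCard] at hS
    obtain ⟨⟨hSs, hScard⟩, hJS⟩ := hS
    rw [Finset.mem_powersetCard]
    exact ⟨Finset.sdiff_subset_sdiff hSs le_rfl, by rw [Finset.card_sdiff_of_subset hJS, hScard]⟩
  · intro T hT
    rw [Finset.mem_powersetCard] at hT
    obtain ⟨hTs, hTcard⟩ := hT
    have hdisj : Disjoint T J := Finset.disjoint_of_subset_left hTs Finset.sdiff_disjoint
    simp only [Finset.mem_filter, Finset.mem_powersetCard]
    refine ⟨⟨Finset.union_subset (hTs.trans Finset.sdiff_subset) hJs, ?_⟩,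
      Finset.subset_union_right⟩
    rw [Finset.card_union_of_disjoint hdisj, hTcard]
    have := Finset.card_le_card hJs
    omega
  · intro S hS
    simp only [Finset.mem_filter] at hS
    exact Finset.sdiff_union_of_subset hS.2
  · intro T hT
    rw [Finset.mem_powersetCard] at hT
    exact Finset.union_sdiff_cancel_right
      (Finset.disjoint_of_subset_left hT.1 Finset.sdiff_disjoint)

private lemma card_fin_filter_mem {k : ℕ} (S : Finset ℕ) (hS : S ⊆ Finset.range k) :
    (Finset.univ.filter (fun i : Fin k => (i : ℕ) ∈ S)).card = S.card := by
  refine Finset.card_bij (fun i _ => (i : ℕ)) ?_ ?_ ?_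
  · intro i hi; simpa using hi
  · intro i _ j _ h; exact Fin.val_injective h
  · intro x hx
    have hxk : x < k := Finset.mem_range.mp (hS hx)
    exact ⟨⟨x, hxk⟩, by simpa using hx, rfl⟩

private lemma filter_product_fst {α β : Type*} [DecidableEq α] [DecidableEq β]
    (s : Finset α) (u : Finset β) (p : α → Prop) [DecidablePred p] :
    ((s ×ˢ u).filter (fun x => p x.1)) = (s.filter p) ×ˢ u := by
  ext x
  simp only [Finset.mem_filter, Finset.mem_product]
  tauto

private lemma card_P_filter (k t q : ℕ) (J : Finset ℕ) (hJ : J ⊆ Finset.range k)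
    (hJt : J.card ≤ t) :
    ((((Finset.range k).powersetCard t) ×ˢ Finset.range (q ^ t)).filter
        (fun p => J ⊆ p.1)).card = (k - J.card).choose (t - J.card) * q ^ t := by
  rw [filter_product_fst, Finset.card_product, Finset.card_range]
  have := count_supersets (Finset.range k) J t hJ hJt
  rw [Finset.card_range] at this
  rw [this]

/-- Design lemma: for `k > t ≥ 1` and any `q ≥ 1`, setting `d = C(k-1,t-1)·q^t`,
there is a set `X` of size `C(k,t)·q^t = dk/t` and `d`-element subsets `A₁,…,A_k` of `X`
such that every element of `X` lies in exactly `t` of the `Aᵢ`, and every `r`-wise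
intersection (`2 ≤ r ≤ t`) has size `d·(t-1)⋯(t-r+1)/((k-1)⋯(k-r+1))`
(stated multiplicatively to stay in ℕ). -/
theorem design_lemma (k t q : ℕ) (ht : 1 ≤ t) (htk : t < k) (hq : 1 ≤ q)
    (d : ℕ) (hd : d = (k - 1).choose (t - 1) * q ^ t) :
    ∃ (X : Finset ℕ) (A : Fin k → Finset ℕ),
      X.card = k.choose t * q ^ t ∧
      (∀ i, A i ⊆ X) ∧
      (∀ i, (A i).card = d) ∧
      (∀ x ∈ X, (Finset.univ.filter (fun i : Fin k => x ∈ A i)).card = t) ∧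
      (∀ r : ℕ, 2 ≤ r → r ≤ t → ∀ I : Finset (Fin k), I.card = r →
        (X.filter (fun x => ∀ i ∈ I, x ∈ A i)).card * ∏ j ∈ Finset.Icc 1 (r - 1), (k - j)
          = d * ∏ j ∈ Finset.Icc 1 (r - 1), (t - j)) := by
  have hinj : Function.Injective (Encodable.encode : Finset ℕ × ℕ → ℕ) :=
    Encodable.encode_injective
  set enc : Finset ℕ × ℕ → ℕ := Encodable.encode with henc
  set P : Finset (Finset ℕ × ℕ) :=
    ((Finset.range k).powersetCard t) ×ˢ Finset.range (q ^ t) with hP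
  refine ⟨P.image enc,
    fun i => (P.filter (fun p => ({(i : ℕ)} : Finset ℕ) ⊆ p.1)).image enc, ?_, ?_, ?_, ?_, ?_⟩
  · rw [Finset.card_image_of_injective _ hinj, hP, Finset.card_product,
      Finset.card_powersetCard, Finset.card_range, Finset.card_range]
  · intro i
    exact Finset.image_subset_image (Finset.filter_subset _ _)
  · intro i
    rw [Finset.card_image_of_injective _ hinj, hP,
      card_P_filter k t q {(i : ℕ)} (by simp [Finset.singleton_subset_iff, i.isLt]) (by simpa)]
    simp [hd]
  · intro x hx
    rw [Finset.mem_image] at hx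
    obtain ⟨p, hpP, rfl⟩ := hx
    have hmem : ∀ i : Fin k,
        (enc p ∈ (P.filter (fun p' => ({(i : ℕ)} : Finset ℕ) ⊆ p'.1)).image enc)
          = ((i : ℕ) ∈ p.1) := by
      intro i
      rw [eq_iff_iff, Finset.mem_image]
      constructor
      · rintro ⟨p', hp', hpe⟩
        rw [hinj hpe] at hp'
        simpa using (Finset.mem_filter.mp hp').2
      · intro h
        exact ⟨p, Finset.mem_filter.mpr ⟨hpP, by simpa⟩, rfl⟩
    simp only [hmem]
    rw [hP, Finset.mem_product, Finset.mem_powersetCard] at hpP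
    rw [card_fin_filter_mem p.1 hpP.1.1, hpP.1.2]
  · intro r hr2 hrt I hI
    set J : Finset ℕ := I.image Fin.val with hJ
    have hJcard : J.card = r := by
      rw [hJ, Finset.card_image_of_injective _ Fin.val_injective, hI]
    have hJsub : J ⊆ Finset.range k := by
      intro x hx
      rw [hJ, Finset.mem_image] at hx
      obtain ⟨i, _, rfl⟩ := hx
      exact Finset.mem_range.mpr i.isLt
    have hset : ((P.image enc).filter (fun x => ∀ i ∈ I, x ∈ (P.filter
          (fun p => ({(i : ℕ)} : Finset ℕ) ⊆ p.1)).image enc))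
        = (P.filter (fun p => J ⊆ p.1)).image enc := by
      ext x
      constructor
      · intro hx
        rw [Finset.mem_filter] at hx
        obtain ⟨hxX, h⟩ := hx
        rw [Finset.mem_image] at hxX
        obtain ⟨p, hpP, rfl⟩ := hxX
        rw [Finset.mem_image]
        refine ⟨p, Finset.mem_filter.mpr ⟨hpP, ?_⟩, rfl⟩
        intro y hy
        rw [hJ, Finset.mem_image] at hy
        obtain ⟨i, hiI, rfl⟩ := hy
        obtain ⟨p', hp', hpe⟩ := Finset.mem_image.mp (h i hiI)
        rw [hinj hpe] at hp'
        simpa using (Finset.mem_filter.mp hp').2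
      · intro hx
        rw [Finset.mem_image] at hx
        obtain ⟨p, hp, rfl⟩ := hx
        rw [Finset.mem_filter] at hp
        rw [Finset.mem_filter]
        refine ⟨Finset.mem_image.mpr ⟨p, hp.1, rfl⟩, ?_⟩
        intro i hiI
        rw [Finset.mem_image]
        refine ⟨p, Finset.mem_filter.mpr ⟨hp.1, ?_⟩, rfl⟩
        rw [Finset.singleton_subset_iff]
        exact hp.2 (by rw [hJ]; exact Finset.mem_image_of_mem _ hiI)
    rw [hset, Finset.card_image_of_injective _ hinj, hP,
      card_P_filter k t q J hJsub (by omega), hJcard, hd,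
      prod_Icc_sub k (r - 1), prod_Icc_sub t (r - 1)]
    have hkr : k - r = (k - 1) - (r - 1) := by omega
    have htr : t - r = (t - 1) - (r - 1) := by omega
    rw [hkr, htr]
    have key := arith_id (k - 1) (t - 1) (r - 1) (by omega) (by omega)
    rw [mul_right_comm, key, mul_right_comm]
end

section
/- For every ε > 0, there exists a finite union-closed family F with a (unique) smallest set S such that every element of S has frequency less than ε in F. -/
namespace SFUC

open Finset

variable (N : ℕ)

/-- block size -/
def dd : ℕ := N*N + N
/-- the small set -/
def SS : Finset ℕ := Finset.range (N*N+1)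
/-- special element of `SS` -/
def star : ℕ := N*N
/-- padding -/
def Pad : Finset ℕ := Finset.Ico (N*N+1) (2*(N*N)+3)
/-- markers -/
def Mk (J : Finset ℕ) : Finset ℕ := J.image (fun b => 2*(N*N)+3+b)
def base : ℕ := 2*(N*N)+3+N
/-- blocks -/
def Ab (b : ℕ) : Finset ℕ := Finset.Ico (base N + b*dd N) (base N + b*dd N + dd N)
def UU : Finset ℕ := Finset.Ico (base N) (base N + N*dd N)
def ff (J : Finset ℕ) : Finset ℕ := (UU N).filter (fun y => ∀ b ∈ J, y ∈ Ab N b)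
def SJ (J : Finset ℕ) : Finset ℕ := J.biUnion (fun b => Finset.Ico (b*N) (b*N+N))
def OO (J : Finset ℕ) : Finset (Finset ℕ) := insert {star N} (SJ N J).powerset
def tl (o : Finset ℕ) : Finset ℕ := if star N ∈ o then SS N else o
def phi (J D o : Finset ℕ) : Finset ℕ := Pad N ∪ Mk N J ∪ ((UU N \ ff N J) ∪ D) ∪ tl N o
def levels : Finset (Finset ℕ) := (Finset.range N).powerset.filter (fun J => J.Nonempty)
def Idx : Finset ((_ : Finset ℕ) × Finset ℕ × Finset ℕ) :=
  (levels N).sigma (fun J => (ff N J).powerset ×ˢ OO N J)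
def Fam : Finset (Finset ℕ) := insert (SS N) ((Idx N).image (fun z => phi N z.1 z.2.1 z.2.2))

/-! basic membership lemmas -/

lemma mem_SS {x : ℕ} : x ∈ SS N ↔ x < N*N+1 := by simp [SS]

lemma star_mem_SS : star N ∈ SS N := by simp [SS, star]

lemma SJ_subset {J : Finset ℕ} (hJ : J ⊆ Finset.range N) : SJ N J ⊆ Finset.range (N*N) := by
  intro y hy
  simp only [SJ, mem_biUnion, mem_Ico] at hy
  obtain ⟨b, hb, h1, h2⟩ := hy
  have hbN : b < N := by simpa using hJ hb
  have h3 : (b+1)*N ≤ N*N := Nat.mul_le_mul_right N hbN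
  rw [add_mul, one_mul] at h3
  simp only [mem_range]
  omega

lemma star_not_mem_SJ {J : Finset ℕ} (hJ : J ⊆ Finset.range N) : star N ∉ SJ N J := by
  intro h
  have := SJ_subset N hJ h
  simp [star] at this

lemma mem_OO_subset_SS {J o : Finset ℕ} (hJ : J ⊆ Finset.range N) (ho : o ∈ OO N J) :
    o ⊆ SS N := by
  rcases Finset.mem_insert.1 ho with h | h
  · subst h; intro y hy; simp only [mem_singleton] at hy; subst hy; exact star_mem_SS N
  · intro y hy
    have := SJ_subset N hJ (Finset.mem_powerset.1 h hy)
    simp only [mem_range] at this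
    exact (mem_SS N).2 (by omega)

lemma mem_OO_of_not_star {J o : Finset ℕ} (hJ : J ⊆ Finset.range N) (ho : o ∈ OO N J)
    (hs : star N ∉ o) : o ⊆ SJ N J := by
  rcases Finset.mem_insert.1 ho with h | h
  · subst h; simp at hs
  · exact Finset.mem_powerset.1 h

lemma tl_subset_SS {J o : Finset ℕ} (hJ : J ⊆ Finset.range N) (ho : o ∈ OO N J) :
    tl N o ⊆ SS N := by
  unfold tl
  split
  · exact Finset.Subset.refl _
  · exact mem_OO_subset_SS N hJ ho

lemma ff_subset_UU {J : Finset ℕ} : ff N J ⊆ UU N := Finset.filter_subset _ _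

lemma Ab_subset_UU {b : ℕ} (hb : b < N) : Ab N b ⊆ UU N := by
  intro y hy
  simp only [Ab, UU, mem_Ico] at *
  have h3 : (b+1) * dd N ≤ N * dd N := Nat.mul_le_mul_right (dd N) hb
  rw [add_mul, one_mul] at h3
  omega

lemma ff_union {J J' : Finset ℕ} : ff N (J ∪ J') = ff N J ∩ ff N J' := by
  ext y
  simp only [ff, mem_filter, mem_inter, Finset.forall_mem_union]
  tauto

lemma ff_singleton {b : ℕ} (hb : b < N) : ff N {b} = Ab N b := by
  ext y
  simp only [ff, mem_filter]
  constructor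
  · exact fun h => h.2 b (Finset.mem_singleton_self b)
  · intro h
    refine ⟨Ab_subset_UU N hb h, fun b' hb' => ?_⟩
    rw [Finset.mem_singleton] at hb'
    subst hb'
    exact h

lemma ff_card_singleton {b : ℕ} (hb : b < N) : (ff N {b}).card = dd N := by
  rw [ff_singleton N hb, Ab, Nat.card_Ico]
  omega

lemma Ab_disjoint {b b' : ℕ} (h : b < b') : Ab N b ∩ Ab N b' = ∅ := by
  ext y
  simp only [Ab, mem_inter, mem_Ico, Finset.notMem_empty, iff_false]
  rintro ⟨⟨h1, h2⟩, ⟨h3, h4⟩⟩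
  have h5 : (b+1) * dd N ≤ b' * dd N := Nat.mul_le_mul_right (dd N) h
  rw [add_mul, one_mul] at h5
  omega

lemma ff_eq_empty {J : Finset ℕ} (hJ2 : 1 < J.card) : ff N J = ∅ := by
  obtain ⟨b, hb, b', hb', hne⟩ := Finset.one_lt_card.1 hJ2
  ext y
  simp only [ff, mem_filter, Finset.notMem_empty, iff_false]
  rintro ⟨hy, hall⟩
  rcases Nat.lt_or_ge b b' with h | h
  · have := Ab_disjoint N h
    have hmem : y ∈ Ab N b ∩ Ab N b' := Finset.mem_inter.2 ⟨hall b hb, hall b' hb'⟩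
    rw [this] at hmem; simp at hmem
  · have hlt : b' < b := by omega
    have := Ab_disjoint N hlt
    have hmem : y ∈ Ab N b' ∩ Ab N b := Finset.mem_inter.2 ⟨hall b' hb', hall b hb⟩
    rw [this] at hmem; simp at hmem

lemma SJ_union {J J' : Finset ℕ} : SJ N (J ∪ J') = SJ N J ∪ SJ N J' := by
  ext y
  simp only [SJ, mem_biUnion, mem_union]
  constructor
  · rintro ⟨a, (h | h), hy⟩
    · exact Or.inl ⟨a, h, hy⟩
    · exact Or.inr ⟨a, h, hy⟩
  · rintro (⟨a, h, hy⟩ | ⟨a, h, hy⟩)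
    · exact ⟨a, Or.inl h, hy⟩
    · exact ⟨a, Or.inr h, hy⟩

lemma Mk_union {J J' : Finset ℕ} : Mk N (J ∪ J') = Mk N J ∪ Mk N J' :=
  Finset.image_union _ _

lemma SJ_card {J : Finset ℕ} : (SJ N J).card = N * J.card := by
  have hdisj : ∀ b ∈ J, ∀ b' ∈ J, b ≠ b' →
      Disjoint (Finset.Ico (b*N) (b*N+N)) (Finset.Ico (b'*N) (b'*N+N)) := by
    intro b _ b' _ hne
    apply Finset.disjoint_left.2
    intro y hy hy'
    simp only [mem_Ico] at hy hy'
    rcases Nat.lt_or_ge b b' with h | h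
    · have h5 : (b+1)*N ≤ b'*N := Nat.mul_le_mul_right N h
      rw [add_mul, one_mul] at h5
      omega
    · have hlt : b' < b := by omega
      have h5 : (b'+1)*N ≤ b*N := Nat.mul_le_mul_right N hlt
      rw [add_mul, one_mul] at h5
      omega
  rw [SJ, Finset.card_biUnion hdisj]
  calc ∑ b ∈ J, (Finset.Ico (b*N) (b*N+N)).card = ∑ _b ∈ J, N :=
        Finset.sum_congr rfl (fun b _ => by rw [Nat.card_Ico]; omega)
    _ = N * J.card := by rw [Finset.sum_const, smul_eq_mul, mul_comm]

/-! union-closure -/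

lemma union_shuffle (p m m' l l' t t' : Finset ℕ) :
    (p ∪ m ∪ l ∪ t) ∪ (p ∪ m' ∪ l' ∪ t') = p ∪ (m ∪ m') ∪ (l ∪ l') ∪ (t ∪ t') := by
  ext a
  simp only [Finset.mem_union]
  tauto

lemma lp_union {J J' D D' : Finset ℕ} (hD : D ⊆ ff N J) (hD' : D' ⊆ ff N J') :
    ((UU N \ ff N J) ∪ D) ∪ ((UU N \ ff N J') ∪ D') =
      (UU N \ ff N (J ∪ J')) ∪ ((D ∪ D') ∩ ff N (J ∪ J')) := by
  ext a
  rw [ff_union]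
  simp only [Finset.mem_union, Finset.mem_sdiff, Finset.mem_inter]
  constructor
  · rintro ((⟨hU, hf⟩ | hDa) | (⟨hU, hf⟩ | hDa))
    · exact Or.inl ⟨hU, fun h => hf h.1⟩
    · by_cases h' : a ∈ ff N J'
      · exact Or.inr ⟨Or.inl hDa, hD hDa, h'⟩
      · exact Or.inl ⟨ff_subset_UU N (hD hDa), fun h => h' h.2⟩
    · exact Or.inl ⟨hU, fun h => hf h.2⟩
    · by_cases h' : a ∈ ff N J
      · exact Or.inr ⟨Or.inr hDa, h', hD' hDa⟩
      · exact Or.inl ⟨ff_subset_UU N (hD' hDa), fun h => h' h.1⟩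
  · rintro (⟨hU, hf⟩ | ⟨hD12, hfJ, hfJ'⟩)
    · by_cases h' : a ∈ ff N J
      · exact Or.inr (Or.inl ⟨hU, fun hh => hf ⟨h', hh⟩⟩)
      · exact Or.inl (Or.inl ⟨hU, h'⟩)
    · rcases hD12 with h | h
      · exact Or.inl (Or.inr h)
      · exact Or.inr (Or.inr h)

/-- the combination of the `o`-components -/
def cmb (o o' : Finset ℕ) : Finset ℕ :=
  if star N ∈ o ∨ star N ∈ o' then {star N} else o ∪ o'

lemma tl_cmb {o o' : Finset ℕ} (ho : o ⊆ SS N) (ho' : o' ⊆ SS N) :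
    tl N o ∪ tl N o' = tl N (cmb N o o') := by
  unfold cmb
  by_cases h1 : star N ∈ o
  · rw [if_pos (Or.inl h1)]
    rw [show tl N o = SS N from if_pos h1,
      show tl N {star N} = SS N from if_pos (Finset.mem_singleton_self _)]
    by_cases h2 : star N ∈ o'
    · rw [show tl N o' = SS N from if_pos h2, Finset.union_self]
    · rw [show tl N o' = o' from if_neg h2]
      exact Finset.union_eq_left.2 ho'
  · by_cases h2 : star N ∈ o'
    · rw [if_pos (Or.inr h2)]
      rw [show tl N o = o from if_neg h1, show tl N o' = SS N from if_pos h2,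
        show tl N {star N} = SS N from if_pos (Finset.mem_singleton_self _)]
      exact Finset.union_eq_right.2 ho
    · rw [if_neg (show ¬(star N ∈ o ∨ star N ∈ o') by tauto)]
      rw [show tl N o = o from if_neg h1, show tl N o' = o' from if_neg h2,
        show tl N (o ∪ o') = o ∪ o' from
          if_neg (by rw [Finset.mem_union]; tauto)]

lemma phi_union {J J' D D' o o' : Finset ℕ} (hD : D ⊆ ff N J) (hD' : D' ⊆ ff N J')
    (ho : o ⊆ SS N) (ho' : o' ⊆ SS N) :
    phi N J D o ∪ phi N J' D' o' =
      phi N (J ∪ J') ((D ∪ D') ∩ ff N (J ∪ J')) (cmb N o o') := by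
  rw [phi, phi, union_shuffle, ← Mk_union, lp_union N hD hD', tl_cmb N ho ho', phi]

lemma mem_Idx {z : (_ : Finset ℕ) × Finset ℕ × Finset ℕ} :
    z ∈ Idx N ↔ (z.1 ⊆ Finset.range N ∧ z.1.Nonempty) ∧ z.2.1 ⊆ ff N z.1 ∧ z.2.2 ∈ OO N z.1 := by
  rcases z with ⟨J, D, o⟩
  simp [Idx, levels, Finset.mem_sigma, Finset.mem_filter, Finset.mem_product,
    Finset.mem_powerset, and_assoc]

lemma cmb_mem_OO {J J' o o' : Finset ℕ} (hJ : J ⊆ Finset.range N) (hJ' : J' ⊆ Finset.range N)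
    (ho : o ∈ OO N J) (ho' : o' ∈ OO N J') : cmb N o o' ∈ OO N (J ∪ J') := by
  unfold cmb
  split
  · exact Finset.mem_insert_self _ _
  · rename_i h
    push_neg at h
    apply Finset.mem_insert_of_mem
    rw [Finset.mem_powerset, SJ_union]
    exact Finset.union_subset_union (mem_OO_of_not_star N hJ ho h.1)
      (mem_OO_of_not_star N hJ' ho' h.2)

lemma idx_union_mem {z z' : (_ : Finset ℕ) × Finset ℕ × Finset ℕ}
    (hz : z ∈ Idx N) (hz' : z' ∈ Idx N) :
    (⟨z.1 ∪ z'.1, (z.2.1 ∪ z'.2.1) ∩ ff N (z.1 ∪ z'.1), cmb N z.2.2 z'.2.2⟩ :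
      (_ : Finset ℕ) × Finset ℕ × Finset ℕ) ∈ Idx N := by
  rw [mem_Idx] at hz hz' ⊢
  refine ⟨⟨Finset.union_subset hz.1.1 hz'.1.1, hz.1.2.mono Finset.subset_union_left⟩,
    Finset.inter_subset_right, cmb_mem_OO N hz.1.1 hz'.1.1 hz.2.2 hz'.2.2⟩

lemma SS_union_phi {J D o : Finset ℕ} (hJ : J ⊆ Finset.range N) (ho : o ∈ OO N J) :
    SS N ∪ phi N J D o = phi N J D {star N} := by
  have ht : tl N o ⊆ SS N := tl_subset_SS N hJ ho
  have h2 : tl N {star N} = SS N := by simp [tl]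
  rw [phi, phi, h2]
  ext a
  simp only [Finset.mem_union]
  have := @ht a
  tauto

lemma star_mem_OO {J : Finset ℕ} : ({star N} : Finset ℕ) ∈ OO N J :=
  Finset.mem_insert_self _ _

lemma unionClosed_Fam : UnionClosed (Fam N) := by
  intro A hA B hB
  rw [Fam, Finset.mem_insert] at hA hB
  rcases hA with rfl | hA
  · rcases hB with rfl | hB
    · rw [Finset.union_self, Fam]
      exact Finset.mem_insert_self _ _
    · obtain ⟨z, hz, rfl⟩ := Finset.mem_image.1 hB
      have hmz := (mem_Idx N).1 hz
      rw [SS_union_phi N hmz.1.1 hmz.2.2]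
      refine Finset.mem_insert_of_mem (Finset.mem_image.2 ⟨⟨z.1, z.2.1, {star N}⟩, ?_, rfl⟩)
      rw [mem_Idx]
      exact ⟨hmz.1, hmz.2.1, star_mem_OO N⟩
  · obtain ⟨z, hz, rfl⟩ := Finset.mem_image.1 hA
    have hmz := (mem_Idx N).1 hz
    rcases hB with rfl | hB
    · rw [Finset.union_comm, SS_union_phi N hmz.1.1 hmz.2.2]
      refine Finset.mem_insert_of_mem (Finset.mem_image.2 ⟨⟨z.1, z.2.1, {star N}⟩, ?_, rfl⟩)
      rw [mem_Idx]
      exact ⟨hmz.1, hmz.2.1, star_mem_OO N⟩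
    · obtain ⟨z', hz', rfl⟩ := Finset.mem_image.1 hB
      have hmz' := (mem_Idx N).1 hz'
      rw [phi_union N hmz.2.1 hmz'.2.1 (mem_OO_subset_SS N hmz.1.1 hmz.2.2)
        (mem_OO_subset_SS N hmz'.1.1 hmz'.2.2)]
      exact Finset.mem_insert_of_mem
        (Finset.mem_image.2 ⟨_, idx_union_mem N hz hz', rfl⟩)

/-! membership characterizations -/

lemma not_mem_Pad {x : ℕ} (hx : x < N*N+1) : x ∉ Pad N := by
  simp only [Pad, Finset.mem_Ico]; omega

lemma not_mem_Mk {x : ℕ} {J : Finset ℕ} (hx : x < N*N+1) : x ∉ Mk N J := by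
  simp only [Mk, Finset.mem_image]
  rintro ⟨b, hb, hbe⟩
  omega

lemma not_mem_UU {x : ℕ} (hx : x < N*N+1) : x ∉ UU N := by
  simp only [UU, Finset.mem_Ico, base]; omega

lemma mem_phi_low {J D o : Finset ℕ} {x : ℕ} (hD : D ⊆ ff N J) (hx : x < N*N+1) :
    x ∈ phi N J D o ↔ x ∈ tl N o := by
  simp only [phi, Finset.mem_union]
  constructor
  · rintro (((h | h) | (h | h)) | h)
    · exact absurd h (not_mem_Pad N hx)
    · exact absurd h (not_mem_Mk N hx)
    · exact absurd (Finset.mem_sdiff.1 h).1 (not_mem_UU N hx)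
    · exact absurd (ff_subset_UU N (hD h)) (not_mem_UU N hx)
    · exact h
  · exact fun h => Or.inr h

lemma mem_phi_marker {J D o : Finset ℕ} {b : ℕ} (hb : b < N) (hJ : J ⊆ Finset.range N)
    (hD : D ⊆ ff N J) (ho : o ∈ OO N J) :
    2*(N*N)+3+b ∈ phi N J D o ↔ b ∈ J := by
  have hU : 2*(N*N)+3+b ∉ UU N := by
    simp only [UU, Finset.mem_Ico, base]; omega
  simp only [phi, Finset.mem_union]
  constructor
  · rintro (((h | h) | (h | h)) | h)
    · exfalso; simp only [Pad, Finset.mem_Ico] at h; omega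
    · simp only [Mk, Finset.mem_image] at h
      obtain ⟨b', hb', he⟩ := h
      have : b' = b := by omega
      subst this; exact hb'
    · exact absurd (Finset.mem_sdiff.1 h).1 hU
    · exact absurd (ff_subset_UU N (hD h)) hU
    · have := tl_subset_SS N hJ ho h
      rw [mem_SS] at this
      omega
  · intro h
    exact Or.inl (Or.inl (Or.inr (Finset.mem_image.2 ⟨b, h, rfl⟩)))

lemma mem_phi_U {J D o : Finset ℕ} {y : ℕ} (hy : y ∈ UU N) (hJ : J ⊆ Finset.range N)
    (hD : D ⊆ ff N J) (ho : o ∈ OO N J) :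
    y ∈ phi N J D o ↔ (y ∉ ff N J ∨ y ∈ D) := by
  have hybig : 2*(N*N)+3+N ≤ y := by
    simp only [UU, Finset.mem_Ico, base] at hy; omega
  simp only [phi, Finset.mem_union]
  constructor
  · rintro (((h | h) | (h | h)) | h)
    · exfalso; simp only [Pad, Finset.mem_Ico] at h; omega
    · exfalso
      simp only [Mk, Finset.mem_image] at h
      obtain ⟨b', hb', he⟩ := h
      have : b' < N := by simpa using hJ hb'
      simp only [UU, Finset.mem_Ico, base] at hy
      omega
    · exact Or.inl (Finset.mem_sdiff.1 h).2
    · exact Or.inr h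
    · exfalso
      have := tl_subset_SS N hJ ho h
      rw [mem_SS] at this
      omega
  · rintro (h | h)
    · exact Or.inl (Or.inr (Or.inl (Finset.mem_sdiff.2 ⟨hy, h⟩)))
    · exact Or.inl (Or.inr (Or.inr h))

lemma star_o_eq {J o : Finset ℕ} (hJ : J ⊆ Finset.range N) (ho : o ∈ OO N J)
    (hs : star N ∈ o) : o = {star N} := by
  rcases Finset.mem_insert.1 ho with h | h
  · exact h
  · exact absurd (Finset.mem_powerset.1 h hs) (star_not_mem_SJ N hJ)

/-! injectivity on the singleton-level part -/

def Idx1 : Finset ((_ : Finset ℕ) × Finset ℕ × Finset ℕ) :=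
  ((Finset.range N).image (fun b => ({b} : Finset ℕ))).sigma
    (fun J => (ff N J).powerset ×ˢ OO N J)

lemma Idx1_subset : Idx1 N ⊆ Idx N := by
  intro z hz
  rw [Idx1, Finset.mem_sigma] at hz
  rw [Idx, Finset.mem_sigma]
  refine ⟨?_, hz.2⟩
  obtain ⟨b, hb, he⟩ := Finset.mem_image.1 hz.1
  rw [levels, Finset.mem_filter, Finset.mem_powerset, ← he]
  exact ⟨Finset.singleton_subset_iff.2 hb, Finset.singleton_nonempty b⟩

lemma phi_injOn :
    Set.InjOn (fun z : (_ : Finset ℕ) × Finset ℕ × Finset ℕ => phi N z.1 z.2.1 z.2.2)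
      ↑(Idx1 N) := by
  rintro ⟨J, D, o⟩ hz ⟨J', D', o'⟩ hz' h
  rw [Finset.mem_coe, Idx1, Finset.mem_sigma] at hz hz'
  obtain ⟨b, hbN, hJe⟩ := Finset.mem_image.1 hz.1
  obtain ⟨b', hbN', hJe'⟩ := Finset.mem_image.1 hz'.1
  rw [Finset.mem_range] at hbN hbN'
  subst hJe hJe'
  simp only at h
  have hprod := Finset.mem_product.1 hz.2
  have hprod' := Finset.mem_product.1 hz'.2
  have hD : D ⊆ ff N {b} := Finset.mem_powerset.1 hprod.1
  have hD' : D' ⊆ ff N {b'} := Finset.mem_powerset.1 hprod'.1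
  have ho : o ∈ OO N {b} := hprod.2
  have ho' : o' ∈ OO N {b'} := hprod'.2
  have hJr : ({b} : Finset ℕ) ⊆ Finset.range N := Finset.singleton_subset_iff.2 (by simpa using hbN)
  have hJr' : ({b'} : Finset ℕ) ⊆ Finset.range N := Finset.singleton_subset_iff.2 (by simpa using hbN')
  -- b = b'
  have hbb : b = b' := by
    have hm : 2*(N*N)+3+b ∈ phi N {b} D o :=
      (mem_phi_marker N hbN hJr hD ho).2 (Finset.mem_singleton_self b)
    rw [h] at hm
    have := (mem_phi_marker N hbN hJr' hD' ho').1 hm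
    exact Finset.mem_singleton.1 this
  subst hbb
  -- D = D'
  have hDD : D = D' := by
    ext y
    constructor
    · intro hyD
      have hyU : y ∈ UU N := ff_subset_UU N (hD hyD)
      have hy1 : y ∈ phi N {b} D o := (mem_phi_U N hyU hJr hD ho).2 (Or.inr hyD)
      rw [h] at hy1
      rcases (mem_phi_U N hyU hJr hD' ho').1 hy1 with h2 | h2
      · exact absurd (hD hyD) h2
      · exact h2
    · intro hyD
      have hyU : y ∈ UU N := ff_subset_UU N (hD' hyD)
      have hy1 : y ∈ phi N {b} D' o' := (mem_phi_U N hyU hJr hD' ho').2 (Or.inr hyD)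
      rw [← h] at hy1
      rcases (mem_phi_U N hyU hJr hD ho).1 hy1 with h2 | h2
      · exact absurd (hD' hyD) h2
      · exact h2
  subst hDD
  -- o = o'
  have hoo : o = o' := by
    by_cases h1 : star N ∈ o <;> by_cases h2 : star N ∈ o'
    · rw [star_o_eq N hJr ho h1, star_o_eq N hJr ho' h2]
    · exfalso
      have hs1 : star N ∈ phi N {b} D o := by
        rw [mem_phi_low N hD (by rw [star]; omega), tl, if_pos h1]
        exact star_mem_SS N
      rw [h] at hs1
      rw [mem_phi_low N hD (by rw [star]; omega), tl, if_neg h2] at hs1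
      exact h2 hs1
    · exfalso
      have hs1 : star N ∈ phi N {b} D o' := by
        rw [mem_phi_low N hD (by rw [star]; omega), tl, if_pos h2]
        exact star_mem_SS N
      rw [← h] at hs1
      rw [mem_phi_low N hD (by rw [star]; omega), tl, if_neg h1] at hs1
      exact h1 hs1
    · have hos : o ⊆ SJ N {b} := mem_OO_of_not_star N hJr ho h1
      have hos' : o' ⊆ SJ N {b} := mem_OO_of_not_star N hJr ho' h2
      ext y
      constructor
      · intro hy
        have hySJ := SJ_subset N hJr (hos hy)
        rw [Finset.mem_range] at hySJ
        have hy1 : y ∈ phi N {b} D o := by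
          rw [mem_phi_low N hD (by omega), tl, if_neg h1]; exact hy
        rw [h] at hy1
        rw [mem_phi_low N hD (by omega), tl, if_neg h2] at hy1
        exact hy1
      · intro hy
        have hySJ := SJ_subset N hJr (hos' hy)
        rw [Finset.mem_range] at hySJ
        have hy1 : y ∈ phi N {b} D o' := by
          rw [mem_phi_low N hD (by omega), tl, if_neg h2]; exact hy
        rw [← h] at hy1
        rw [mem_phi_low N hD (by omega), tl, if_neg h1] at hy1
        exact hy1
  rw [hoo]

lemma OO_card {J : Finset ℕ} (hJ : J ⊆ Finset.range N) :
    (OO N J).card = 2 ^ (N * J.card) + 1 := by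
  rw [OO, Finset.card_insert_of_notMem, Finset.card_powerset, SJ_card]
  rw [Finset.mem_powerset]
  intro hsub
  exact star_not_mem_SJ N hJ (hsub (Finset.mem_singleton_self _))

lemma Idx1_card : (Idx1 N).card = N * (2 ^ dd N * (2 ^ N + 1)) := by
  rw [Idx1, Finset.card_sigma, Finset.sum_image
    (fun b _ b' _ h => (Finset.singleton_inj).1 h)]
  have : ∀ b ∈ Finset.range N,
      ((ff N {b}).powerset ×ˢ OO N {b}).card = 2 ^ dd N * (2 ^ N + 1) := by
    intro b hb
    rw [Finset.mem_range] at hb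
    rw [Finset.card_product, Finset.card_powerset, ff_card_singleton N hb,
      OO_card N (Finset.singleton_subset_iff.2 (by simpa using hb)),
      Finset.card_singleton, mul_one]
  rw [Finset.sum_congr rfl this, Finset.sum_const, Finset.card_range, smul_eq_mul]

lemma Fam_card_lb : N * (2 ^ dd N * (2 ^ N + 1)) ≤ (Fam N).card := by
  calc N * (2 ^ dd N * (2 ^ N + 1)) = (Idx1 N).card := (Idx1_card N).symm
    _ = ((Idx1 N).image (fun z => phi N z.1 z.2.1 z.2.2)).card :=
        (Finset.card_image_of_injOn (phi_injOn N)).symm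
    _ ≤ ((Idx N).image (fun z => phi N z.1 z.2.1 z.2.2)).card :=
        Finset.card_le_card (Finset.image_subset_image (Idx1_subset N))
    _ ≤ (Fam N).card := Finset.card_le_card (Finset.subset_insert _ _)

/-! counting sets containing a fixed small element -/

lemma pow_filter_mem_card_le (s : Finset ℕ) (a : ℕ) :
    ((s.powerset).filter (fun o => a ∈ o)).card ≤ 2 ^ (s.card - 1) := by
  by_cases ha : a ∈ s
  · have h1 : ((s.powerset).filter (fun o => a ∈ o)).card ≤ ((s.erase a).powerset).card := by
      apply Finset.card_le_card_of_injOn (fun o => o.erase a)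
      · intro o hof
        rw [Finset.mem_coe, Finset.mem_filter, Finset.mem_powerset] at hof
        rw [Finset.mem_coe, Finset.mem_powerset]
        exact Finset.erase_subset_erase a hof.1
      · intro o ho o' ho' he
        have he2 : o.erase a = o'.erase a := he
        rw [Finset.mem_coe, Finset.mem_filter] at ho ho'
        ext y
        by_cases hy : y = a
        · subst hy; simp [ho.2, ho'.2]
        · constructor
          · intro hyo
            have : y ∈ o.erase a := Finset.mem_erase.2 ⟨hy, hyo⟩
            rw [he2] at this
            exact (Finset.mem_erase.1 this).2
          · intro hyo
            have : y ∈ o'.erase a := Finset.mem_erase.2 ⟨hy, hyo⟩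
            rw [← he2] at this
            exact (Finset.mem_erase.1 this).2
    rw [Finset.card_powerset, Finset.card_erase_of_mem ha] at h1
    exact h1
  · have : (s.powerset).filter (fun o => a ∈ o) = ∅ := by
      rw [Finset.filter_eq_empty_iff]
      intro o ho hao
      exact ha (Finset.mem_powerset.1 ho hao)
    rw [this]
    simp

/-- the per-level count bound -/
lemma level_count_le {x : ℕ} {J : Finset ℕ} (hJ : J ∈ levels N) :
    2 ^ (ff N J).card *
      ((OO N J).filter (fun o => star N ∈ o ∨ x ∈ o)).card ≤
      (if J.card = 1 ∧ x ∈ SJ N J then 2 ^ (dd N + N - 1) else 0) +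
        (if J.card = 1 then 2 ^ (dd N) else 0) + 2 ^ (N*N+1) := by
  rw [levels, Finset.mem_filter, Finset.mem_powerset] at hJ
  have hJcard : J.card ≤ N := by
    calc J.card ≤ (Finset.range N).card := Finset.card_le_card hJ.1
      _ = N := Finset.card_range N
  have hfilter : ((OO N J).filter (fun o => star N ∈ o ∨ x ∈ o)).card ≤
      1 + ((SJ N J).powerset.filter (fun o => x ∈ o)).card := by
    have hsub : (OO N J).filter (fun o => star N ∈ o ∨ x ∈ o) ⊆
        insert {star N} ((SJ N J).powerset.filter (fun o => x ∈ o)) := by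
      intro o ho
      rw [Finset.mem_filter] at ho
      rcases Finset.mem_insert.1 ho.1 with h | h
      · exact Finset.mem_insert.2 (Or.inl h)
      · have hox : x ∈ o := by
          rcases ho.2 with h2 | h2
          · exact absurd (Finset.mem_powerset.1 h h2) (star_not_mem_SJ N hJ.1)
          · exact h2
        exact Finset.mem_insert.2 (Or.inr (Finset.mem_filter.2 ⟨h, hox⟩))
    calc ((OO N J).filter (fun o => star N ∈ o ∨ x ∈ o)).card ≤
        (insert {star N} ((SJ N J).powerset.filter (fun o => x ∈ o))).card :=
          Finset.card_le_card hsub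
      _ ≤ 1 + ((SJ N J).powerset.filter (fun o => x ∈ o)).card := by
          rw [add_comm]; exact Finset.card_insert_le _ _
  have hcnt : ((SJ N J).powerset.filter (fun o => x ∈ o)).card ≤
      if x ∈ SJ N J then 2 ^ (N * J.card - 1) else 0 := by
    by_cases hx : x ∈ SJ N J
    · rw [if_pos hx, ← SJ_card N]
      exact pow_filter_mem_card_le _ _
    · rw [if_neg hx]
      have : ((SJ N J).powerset.filter (fun o => x ∈ o)) = ∅ := by
        rw [Finset.filter_eq_empty_iff]
        intro o ho hxo
        exact hx (Finset.mem_powerset.1 ho hxo)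
      rw [this]
      simp
  by_cases h1 : J.card = 1
  · obtain ⟨b, hb⟩ := Finset.card_eq_one.1 h1
    subst hb
    have hbN : b < N := by simpa using hJ.1 (Finset.mem_singleton_self b)
    have hN1 : 1 ≤ N := by omega
    rw [ff_card_singleton N hbN]
    by_cases hx : x ∈ SJ N {b}
    · rw [if_pos ⟨h1, hx⟩, if_pos h1]
      have hc : ((SJ N {b}).powerset.filter (fun o => x ∈ o)).card ≤ 2 ^ (N - 1) := by
        have h := pow_filter_mem_card_le (SJ N {b}) x
        rw [SJ_card N, Finset.card_singleton, mul_one] at h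
        exact h
      have hOO : ((OO N {b}).filter (fun o => star N ∈ o ∨ x ∈ o)).card ≤ 1 + 2 ^ (N - 1) := by
        omega
      calc 2 ^ dd N * ((OO N {b}).filter (fun o => star N ∈ o ∨ x ∈ o)).card ≤
          2 ^ dd N * (1 + 2 ^ (N - 1)) := Nat.mul_le_mul_left _ hOO
        _ = 2 ^ dd N + 2 ^ dd N * 2 ^ (N - 1) := by ring
        _ = 2 ^ dd N + 2 ^ (dd N + (N - 1)) := by rw [pow_add]
        _ ≤ 2 ^ (dd N + N - 1) + 2 ^ dd N + 2 ^ (N*N+1) := by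
            have hNN : dd N + (N - 1) = dd N + N - 1 := by omega
            rw [hNN, Nat.add_comm (2 ^ dd N)]
            exact Nat.le_add_right _ _
    · rw [if_neg (by tauto), if_pos h1]
      have hc : ((SJ N {b}).powerset.filter (fun o => x ∈ o)).card = 0 := by
        rw [Finset.card_eq_zero, Finset.filter_eq_empty_iff]
        intro o ho hxo
        exact hx (Finset.mem_powerset.1 ho hxo)
      have hOO : ((OO N {b}).filter (fun o => star N ∈ o ∨ x ∈ o)).card ≤ 1 := by
        omega
      calc 2 ^ dd N * ((OO N {b}).filter (fun o => star N ∈ o ∨ x ∈ o)).card ≤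
          2 ^ dd N * 1 := Nat.mul_le_mul_left _ hOO
        _ = 2 ^ dd N := by ring
        _ ≤ 0 + 2 ^ dd N + 2 ^ (N*N+1) := by
            rw [Nat.zero_add]
            exact Nat.le_add_right _ _
  · have h2 : 2 ≤ J.card := by
      have h0 : J.card ≠ 0 := by
        rw [Finset.card_ne_zero]
        exact hJ.2
      omega
    have hffe : (ff N J).card = 0 := by
      rw [ff_eq_empty N (by omega), Finset.card_empty]
    rw [hffe, pow_zero, one_mul, if_neg (by omega), if_neg (by omega)]
    have hexp : N * J.card - 1 ≤ N * N - 1 := by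
      have : N * J.card ≤ N * N := Nat.mul_le_mul_left N hJcard
      omega
    have hb1 : (if x ∈ SJ N J then 2 ^ (N * J.card - 1) else 0) ≤ 2 ^ (N*N - 1) := by
      split
      · exact Nat.pow_le_pow_right (by omega) hexp
      · exact Nat.zero_le _
    have hb2 : 2 ^ (N*N - 1) + 1 ≤ 2 ^ (N*N+1) := by
      have h3 : N*N - 1 ≤ N*N + 1 := by omega
      have := Nat.pow_le_pow_right (show 0 < 2 by omega) h3
      have h4 : (1:ℕ) ≤ 2 ^ (N*N - 1) := Nat.one_le_two_pow
      have h5 : 2 ^ (N*N - 1) + 2 ^ (N*N - 1) ≤ 2 ^ (N*N+1) := by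
        rw [← two_mul, ← pow_succ']
        exact Nat.pow_le_pow_right (by omega) (by omega)
      omega
    have := le_trans hfilter (by omega : 1 + ((SJ N J).powerset.filter (fun o => x ∈ o)).card ≤
      1 + (if x ∈ SJ N J then 2 ^ (N * J.card - 1) else 0))
    omega

lemma levels_card_le : (levels N).card ≤ 2 ^ N := by
  calc (levels N).card ≤ ((Finset.range N).powerset).card :=
        Finset.card_le_card (Finset.filter_subset _ _)
    _ = 2 ^ N := by rw [Finset.card_powerset, Finset.card_range]

lemma SJ_singleton {b : ℕ} : SJ N {b} = Finset.Ico (b*N) (b*N+N) := by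
  rw [SJ, Finset.singleton_biUnion]

lemma filter_card_one_le : ((levels N).filter (fun J => J.card = 1)).card ≤ N := by
  have hsub : (levels N).filter (fun J => J.card = 1) ⊆
      (Finset.range N).image (fun b => ({b} : Finset ℕ)) := by
    intro J hJ
    rw [Finset.mem_filter] at hJ
    obtain ⟨b, hb⟩ := Finset.card_eq_one.1 hJ.2
    subst hb
    rw [levels, Finset.mem_filter, Finset.mem_powerset] at hJ
    exact Finset.mem_image.2 ⟨b, hJ.1.1 (Finset.mem_singleton_self b), rfl⟩
  calc ((levels N).filter (fun J => J.card = 1)).card ≤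
      ((Finset.range N).image (fun b => ({b} : Finset ℕ))).card := Finset.card_le_card hsub
    _ ≤ (Finset.range N).card := Finset.card_image_le
    _ = N := Finset.card_range N

lemma filter_special_le_one {x : ℕ} :
    ((levels N).filter (fun J => J.card = 1 ∧ x ∈ SJ N J)).card ≤ 1 := by
  rw [Finset.card_le_one]
  intro J hJ J' hJ'
  rw [Finset.mem_filter] at hJ hJ'
  obtain ⟨b, hb⟩ := Finset.card_eq_one.1 hJ.2.1
  obtain ⟨b', hb'⟩ := Finset.card_eq_one.1 hJ'.2.1
  subst hb hb'
  have hx := hJ.2.2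
  have hx' := hJ'.2.2
  rw [SJ_singleton, Finset.mem_Ico] at hx hx'
  have : b = b' := by
    rcases Nat.lt_trichotomy b b' with h | h | h
    · have h5 : (b+1)*N ≤ b'*N := Nat.mul_le_mul_right N h
      rw [add_mul, one_mul] at h5
      omega
    · exact h
    · have h5 : (b'+1)*N ≤ b*N := Nat.mul_le_mul_right N h
      rw [add_mul, one_mul] at h5
      omega
  rw [this]

lemma num_idx_le {x : ℕ} (hx : x < N*N+1) :
    ((Idx N).filter (fun z => x ∈ phi N z.1 z.2.1 z.2.2)).card ≤
      2 ^ (dd N + N - 1) + N * 2 ^ dd N + 2 ^ N * 2 ^ (N*N+1) := by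
  have hcongr : (Idx N).filter (fun z => x ∈ phi N z.1 z.2.1 z.2.2) =
      (Idx N).filter (fun z => star N ∈ z.2.2 ∨ x ∈ z.2.2) := by
    apply Finset.filter_congr
    intro z hz
    have hmz := (mem_Idx N).1 hz
    rw [mem_phi_low N hmz.2.1 hx]
    unfold tl
    by_cases hs : star N ∈ z.2.2
    · rw [if_pos hs]
      simp only [hs, true_or, iff_true]
      exact (mem_SS N).2 hx
    · rw [if_neg hs]
      simp only [hs, false_or]
  rw [hcongr]
  have hsig : (Idx N).filter (fun z => star N ∈ z.2.2 ∨ x ∈ z.2.2) =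
      (levels N).sigma (fun J => ((ff N J).powerset ×ˢ OO N J).filter
        (fun w => star N ∈ w.2 ∨ x ∈ w.2)) := by
    ext z
    rw [Finset.mem_filter, Idx, Finset.mem_sigma, Finset.mem_sigma, Finset.mem_filter]
    tauto
  rw [hsig, Finset.card_sigma]
  have hprod : ∀ J ∈ levels N,
      (((ff N J).powerset ×ˢ OO N J).filter (fun w => star N ∈ w.2 ∨ x ∈ w.2)).card =
        2 ^ (ff N J).card * ((OO N J).filter (fun o => star N ∈ o ∨ x ∈ o)).card := by
    intro J _
    have : ((ff N J).powerset ×ˢ OO N J).filter (fun w => star N ∈ w.2 ∨ x ∈ w.2) =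
        (ff N J).powerset ×ˢ (OO N J).filter (fun o => star N ∈ o ∨ x ∈ o) := by
      ext ⟨D, o⟩
      simp only [Finset.mem_filter, Finset.mem_product]
      tauto
    rw [this, Finset.card_product, Finset.card_powerset]
  rw [Finset.sum_congr rfl hprod]
  have hle := Finset.sum_le_sum (fun J hJ => level_count_le N (x := x) hJ)
  refine le_trans hle ?_
  rw [Finset.sum_add_distrib, Finset.sum_add_distrib]
  have h1 : (∑ J ∈ levels N, if J.card = 1 ∧ x ∈ SJ N J then 2 ^ (dd N + N - 1) else 0) ≤
      2 ^ (dd N + N - 1) := by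
    calc (∑ J ∈ levels N, if J.card = 1 ∧ x ∈ SJ N J then 2 ^ (dd N + N - 1) else 0) =
        ∑ _J ∈ (levels N).filter (fun J => J.card = 1 ∧ x ∈ SJ N J), 2 ^ (dd N + N - 1) :=
          (Finset.sum_filter _ _).symm
      _ = ((levels N).filter (fun J => J.card = 1 ∧ x ∈ SJ N J)).card * 2 ^ (dd N + N - 1) := by
          rw [Finset.sum_const, smul_eq_mul]
      _ ≤ 1 * 2 ^ (dd N + N - 1) :=
          Nat.mul_le_mul_right _ (filter_special_le_one N)
      _ = 2 ^ (dd N + N - 1) := one_mul _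
  have h2 : (∑ J ∈ levels N, if J.card = 1 then 2 ^ dd N else 0) ≤ N * 2 ^ dd N := by
    calc (∑ J ∈ levels N, if J.card = 1 then 2 ^ dd N else 0) =
        ∑ _J ∈ (levels N).filter (fun J => J.card = 1), 2 ^ dd N :=
          (Finset.sum_filter _ _).symm
      _ = ((levels N).filter (fun J => J.card = 1)).card * 2 ^ dd N := by
          rw [Finset.sum_const, smul_eq_mul]
      _ ≤ N * 2 ^ dd N := Nat.mul_le_mul_right _ (filter_card_one_le N)
  have h3 : (∑ _J ∈ levels N, 2 ^ (N*N+1)) ≤ 2 ^ N * 2 ^ (N*N+1) := by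
    rw [Finset.sum_const, smul_eq_mul]
    exact Nat.mul_le_mul_right _ (levels_card_le N)
  exact add_le_add (add_le_add h1 h2) h3

lemma two_pow_aux : ∀ m : ℕ, m + 8 ≤ 2 ^ (m + 4) := by
  intro m
  induction m with
  | zero => norm_num
  | succ k ih =>
      have h : 2 ^ (k + 1 + 4) = 2 ^ (k + 4) * 2 := by rw [← pow_succ]
      omega

lemma N3_le (hN : 5 ≤ N) : N + 3 ≤ 2 ^ (N - 1) := by
  have h := two_pow_aux (N - 5)
  have he : N - 5 + 4 = N - 1 := by omega
  rw [he] at h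
  omega

lemma num_le (hN : 5 ≤ N) {x : ℕ} (hx : x < N*N+1) :
    ((Fam N).filter (fun A => x ∈ A)).card ≤ 2 ^ (dd N + N) := by
  have himg : (((Idx N).image (fun z => phi N z.1 z.2.1 z.2.2)).filter
      (fun A => x ∈ A)).card ≤
      ((Idx N).filter (fun z => x ∈ phi N z.1 z.2.1 z.2.2)).card := by
    rw [Finset.filter_image]
    exact Finset.card_image_le
  have step1 : ((Fam N).filter (fun A => x ∈ A)).card ≤
      1 + ((Idx N).filter (fun z => x ∈ phi N z.1 z.2.1 z.2.2)).card := by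
    rw [Fam, Finset.filter_insert]
    split
    · calc (insert (SS N) (((Idx N).image (fun z => phi N z.1 z.2.1 z.2.2)).filter
          (fun A => x ∈ A))).card ≤
            (((Idx N).image (fun z => phi N z.1 z.2.1 z.2.2)).filter (fun A => x ∈ A)).card + 1 :=
            Finset.card_insert_le _ _
        _ ≤ 1 + ((Idx N).filter (fun z => x ∈ phi N z.1 z.2.1 z.2.2)).card := by omega
    · exact le_trans himg (by omega)
  have step2 := num_idx_le N hx
  have e0 : 2 ^ N * 2 ^ (N*N+1) = 2 ^ dd N * 2 := by
    rw [← pow_add, ← pow_succ]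
    congr 1
    show N + (N*N+1) = (N*N+N) + 1
    ring
  have e1 : 2 ^ (dd N + N) = 2 ^ (dd N + N - 1) * 2 := by
    rw [← pow_succ]
    congr 1
    omega
  have e2 : 2 ^ (dd N + N - 1) = 2 ^ dd N * 2 ^ (N - 1) := by
    rw [← pow_add]
    congr 1
    omega
  have e3 : 1 ≤ 2 ^ dd N := Nat.one_le_two_pow
  have h8 : N + 3 ≤ 2 ^ (N - 1) := N3_le N hN
  have hmul : 2 ^ dd N * (N + 3) ≤ 2 ^ dd N * 2 ^ (N - 1) := Nat.mul_le_mul_left _ h8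
  calc ((Fam N).filter (fun A => x ∈ A)).card ≤
      1 + (2 ^ (dd N + N - 1) + N * 2 ^ dd N + 2 ^ N * 2 ^ (N*N+1)) :=
        le_trans step1 (Nat.add_le_add_left step2 1)
    _ = 2 ^ (dd N + N - 1) + (1 + N * 2 ^ dd N + 2 ^ dd N * 2) := by rw [e0]; ring
    _ ≤ 2 ^ (dd N + N - 1) + 2 ^ dd N * (N + 3) := by
        have hin : 1 + N * 2 ^ dd N + 2 ^ dd N * 2 ≤ 2 ^ dd N * (N + 3) := by nlinarith
        omega
    _ ≤ 2 ^ (dd N + N - 1) + 2 ^ dd N * 2 ^ (N - 1) := by omega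
    _ = 2 ^ (dd N + N - 1) + 2 ^ (dd N + N - 1) := by rw [← e2]
    _ = 2 ^ (dd N + N) := by rw [e1]; ring

lemma SS_card : (SS N).card = N*N+1 := Finset.card_range _

lemma SS_mem_Fam : SS N ∈ Fam N := Finset.mem_insert_self _ _

lemma Pad_subset_phi {J D o : Finset ℕ} : Pad N ⊆ phi N J D o := by
  rw [phi]
  exact ((Finset.subset_union_left).trans Finset.subset_union_left).trans
    Finset.subset_union_left

lemma card_min {A : Finset ℕ} (hA : A ∈ Fam N) (hne : A ≠ SS N) :
    (SS N).card < A.card := by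
  rcases Finset.mem_insert.1 hA with h | h
  · exact absurd h hne
  · obtain ⟨z, _, rfl⟩ := Finset.mem_image.1 h
    have hsub : Pad N ⊆ phi N z.1 z.2.1 z.2.2 := Pad_subset_phi N
    have hcard := Finset.card_le_card hsub
    have hPad : (Pad N).card = N*N+2 := by
      rw [Pad, Nat.card_Ico]
      omega
    rw [SS_card]
    omega

end SFUC

/-- Main theorem: for every `ε > 0` there is a finite union-closed family `F` with a
unique smallest set `S` (nonempty) such that every element of `S` has frequency less
than `ε` in `F`. -/
theorem small_frequency_union_closed (ε : ℚ) (hε : 0 < ε) :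
    ∃ F : Finset (Finset ℕ), F.Nonempty ∧ UnionClosed F ∧
      ∃ S ∈ F, S.Nonempty ∧ (∀ A ∈ F, A ≠ S → S.card < A.card) ∧
        ∀ x ∈ S, ((F.filter (fun A => x ∈ A)).card : ℚ) / F.card < ε := by
  classical
  set N : ℕ := max 5 ⌈(3:ℚ)/ε⌉₊ with hNdef
  have hN5 : 5 ≤ N := le_max_left _ _
  have hN0 : 0 < N := by omega
  have h3N : (3:ℚ) ≤ ε * N := by
    have hceil : (3:ℚ)/ε ≤ (⌈(3:ℚ)/ε⌉₊ : ℚ) := Nat.le_ceil _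
    have hle : ((⌈(3:ℚ)/ε⌉₊ : ℕ) : ℚ) ≤ (N : ℚ) := by
      exact_mod_cast le_max_right 5 ⌈(3:ℚ)/ε⌉₊
    have hdiv : (3:ℚ)/ε ≤ (N : ℚ) := le_trans hceil hle
    calc (3:ℚ) = ε * ((3:ℚ)/ε) := by field_simp
      _ ≤ ε * N := mul_le_mul_of_nonneg_left hdiv hε.le
  refine ⟨SFUC.Fam N, ⟨SFUC.SS N, SFUC.SS_mem_Fam N⟩, SFUC.unionClosed_Fam N,
    SFUC.SS N, SFUC.SS_mem_Fam N, ?_, fun A hA hne => SFUC.card_min N hA hne, ?_⟩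
  · exact ⟨0, by rw [SFUC.mem_SS]; omega⟩
  · intro x hx
    rw [SFUC.mem_SS] at hx
    have hnum := SFUC.num_le N hN5 hx
    have hden := SFUC.Fam_card_lb N
    have hden0 : 0 < (SFUC.Fam N).card :=
      Finset.card_pos.2 ⟨SFUC.SS N, SFUC.SS_mem_Fam N⟩
    rw [div_lt_iff₀ (by exact_mod_cast hden0)]
    have hnumQ : (((SFUC.Fam N).filter (fun A => x ∈ A)).card : ℚ) ≤
        (2:ℚ) ^ SFUC.dd N * 2 ^ N := by
      calc (((SFUC.Fam N).filter (fun A => x ∈ A)).card : ℚ) ≤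
          ((2 ^ (SFUC.dd N + N) : ℕ) : ℚ) := by exact_mod_cast hnum
        _ = (2:ℚ) ^ SFUC.dd N * 2 ^ N := by push_cast [pow_add]; ring
    have hdenQ : (N:ℚ) * ((2:ℚ) ^ SFUC.dd N * (2 ^ N + 1)) ≤ ((SFUC.Fam N).card : ℚ) := by
      calc (N:ℚ) * ((2:ℚ) ^ SFUC.dd N * (2 ^ N + 1)) =
          ((N * (2 ^ SFUC.dd N * (2 ^ N + 1)) : ℕ) : ℚ) := by push_cast; ring
        _ ≤ ((SFUC.Fam N).card : ℚ) := by exact_mod_cast hden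
    have hQpos : (0:ℚ) < (2:ℚ) ^ SFUC.dd N * (2 ^ N + 1) := by positivity
    have hQpos2 : (0:ℚ) < (2:ℚ) ^ SFUC.dd N * 2 ^ N := by positivity
    calc (((SFUC.Fam N).filter (fun A => x ∈ A)).card : ℚ) ≤
        (2:ℚ) ^ SFUC.dd N * 2 ^ N := hnumQ
      _ < 3 * ((2:ℚ) ^ SFUC.dd N * (2 ^ N + 1)) := by
          have hA : (0:ℚ) < 2 ^ SFUC.dd N := by positivity
          have hB : (0:ℚ) < (2:ℚ) ^ N := by positivity
          nlinarith [mul_pos hA hB]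
      _ ≤ (ε * N) * ((2:ℚ) ^ SFUC.dd N * (2 ^ N + 1)) :=
          mul_le_mul_of_nonneg_right h3N hQpos.le
      _ = ε * ((N:ℚ) * ((2:ℚ) ^ SFUC.dd N * (2 ^ N + 1))) := by ring
      _ ≤ ε * ((SFUC.Fam N).card : ℚ) := mul_le_mul_of_nonneg_left hdenQ hε.le
end

section
/- For every k ≥ 3, there exists a union-closed family whose unique smallest set S has size k and in which every element of S has frequency strictly less than 1/2. -/
open Finset

-- blocks
def blk (k j : ℕ) : Finset ℕ := Finset.Ico ((j+1)*(k+1)) ((j+2)*(k+1))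

def bigB (k : ℕ) (T : Finset ℕ) : Finset ℕ := T.biUnion (blk k)

lemma blk_card (k j : ℕ) : (blk k j).card = k + 1 := by
  simp [blk, Nat.card_Ico]; ring_nf; omega

lemma blk_ge (k j : ℕ) {a : ℕ} (ha : a ∈ blk k j) : k + 1 ≤ a := by
  simp [blk] at ha
  nlinarith [ha.1, ha.2]

lemma bigB_ge (k : ℕ) (T : Finset ℕ) {a : ℕ} (ha : a ∈ bigB k T) : k + 1 ≤ a := by
  simp [bigB] at ha
  obtain ⟨j, _, hj⟩ := ha
  exact blk_ge k j hj

lemma bigB_union (k : ℕ) (T T' : Finset ℕ) : bigB k (T ∪ T') = bigB k T ∪ bigB k T' := by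
  ext a
  simp only [bigB, mem_biUnion, mem_union]
  constructor
  · rintro ⟨j, hj | hj, ha⟩
    · exact Or.inl ⟨j, hj, ha⟩
    · exact Or.inr ⟨j, hj, ha⟩
  · rintro (⟨j, hj, ha⟩ | ⟨j, hj, ha⟩)
    · exact ⟨j, Or.inl hj, ha⟩
    · exact ⟨j, Or.inr hj, ha⟩

lemma mem_blk_self (k j : ℕ) : (j+1)*(k+1) ∈ blk k j := by
  simp [blk]

lemma blk_elt_unique (k j j' : ℕ) (h : (j+1)*(k+1) ∈ blk k j') : j = j' := by
  simp [blk] at h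
  omega

lemma bigB_inj (k : ℕ) {T T' : Finset ℕ} (h : bigB k T = bigB k T') : T = T' := by
  ext j
  constructor <;> intro hj
  · have : (j+1)*(k+1) ∈ bigB k T' := h ▸ (by simp [bigB]; exact ⟨j, hj, mem_blk_self k j⟩)
    simp [bigB] at this
    obtain ⟨j', hj', hmem⟩ := this
    rwa [← blk_elt_unique k j j' hmem] at hj'
  · have : (j+1)*(k+1) ∈ bigB k T := h ▸ (by simp [bigB]; exact ⟨j, hj, mem_blk_self k j⟩)
    simp [bigB] at this
    obtain ⟨j', hj', hmem⟩ := this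
    rwa [← blk_elt_unique k j j' hmem] at hj'

-- the parameter set
def Pfam (k : ℕ) : Finset (Finset ℕ × Finset ℕ) :=
  ((Finset.range (k+1)).powerset ×ˢ (Finset.range k).powerset).filter
    (fun p => p.1.Nonempty ∧ (p.2 ⊆ p.1 ∨ p.2 = Finset.range k))

lemma mem_Pfam {k : ℕ} {p : Finset ℕ × Finset ℕ} :
    p ∈ Pfam k ↔ p.1 ⊆ Finset.range (k+1) ∧ p.2 ⊆ Finset.range k ∧ p.1.Nonempty ∧
      (p.2 ⊆ p.1 ∨ p.2 = Finset.range k) := by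
  simp [Pfam, Finset.mem_filter, Finset.mem_product]
  tauto

-- the set associated to a pair
def mkSet (k : ℕ) (p : Finset ℕ × Finset ℕ) : Finset ℕ := p.2 ∪ bigB k p.1

def Ffam (k : ℕ) : Finset (Finset ℕ) :=
  insert (Finset.range k) ((Pfam k).image (mkSet k))

lemma unionClosed_Ffam (k : ℕ) : UnionClosed (Ffam k) := by
  intro A hA B hB
  simp only [Ffam, Finset.mem_insert, Finset.mem_image] at hA hB ⊢
  rcases hA with rfl | ⟨p, hp, rfl⟩
  · rcases hB with rfl | ⟨q, hq, rfl⟩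
    · left; simp
    · right
      refine ⟨(q.1, Finset.range k), ?_, ?_⟩
      · rw [mem_Pfam] at hq ⊢
        exact ⟨hq.1, le_refl _, hq.2.2.1, Or.inr rfl⟩
      · rw [mem_Pfam] at hq
        have : q.2 ⊆ Finset.range k := hq.2.1
        simp only [mkSet]
        rw [← Finset.union_assoc]
        congr 1
        exact (Finset.union_eq_left.mpr this).symm
  · rcases hB with rfl | ⟨q, hq, rfl⟩
    · right
      refine ⟨(p.1, Finset.range k), ?_, ?_⟩
      · rw [mem_Pfam] at hp ⊢
        exact ⟨hp.1, le_refl _, hp.2.2.1, Or.inr rfl⟩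
      · rw [mem_Pfam] at hp
        have : p.2 ⊆ Finset.range k := hp.2.1
        simp only [mkSet]
        rw [Finset.union_comm (p.2 ∪ bigB k p.1), ← Finset.union_assoc]
        congr 1
        exact (Finset.union_eq_left.mpr this).symm
    · right
      refine ⟨(p.1 ∪ q.1, p.2 ∪ q.2), ?_, ?_⟩
      · rw [mem_Pfam] at hp hq ⊢
        refine ⟨Finset.union_subset hp.1 hq.1, Finset.union_subset hp.2.1 hq.2.1,
          hp.2.2.1.mono Finset.subset_union_left, ?_⟩
        rcases hp.2.2.2 with h1 | h1
        · rcases hq.2.2.2 with h2 | h2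
          · exact Or.inl (Finset.union_subset (h1.trans Finset.subset_union_left)
              (h2.trans Finset.subset_union_right))
          · right
            rw [h2]
            exact Finset.union_eq_right.mpr (h2 ▸ hp.2.1)
        · right
          rw [h1]
          exact Finset.union_eq_left.mpr (h1 ▸ hq.2.1)
      · simp only [mkSet, bigB_union]
        ext a; simp; tauto

lemma mkSet_inter_range {k : ℕ} {p : Finset ℕ × Finset ℕ} (hp : p.2 ⊆ Finset.range k) :
    mkSet k p ∩ Finset.range k = p.2 := by
  ext a
  simp only [mkSet, Finset.mem_inter, Finset.mem_union, Finset.mem_range]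
  constructor
  · rintro ⟨h1 | h1, h2⟩
    · exact h1
    · exact absurd (bigB_ge k p.1 h1) (by omega)
  · intro h
    exact ⟨Or.inl h, Finset.mem_range.mp (hp h)⟩

lemma mkSet_sdiff_range {k : ℕ} {p : Finset ℕ × Finset ℕ} (hp : p.2 ⊆ Finset.range k) :
    mkSet k p \ Finset.range k = bigB k p.1 := by
  ext a
  simp only [mkSet, Finset.mem_sdiff, Finset.mem_union, Finset.mem_range]
  constructor
  · rintro ⟨h1 | h1, h2⟩
    · exact absurd (Finset.mem_range.mp (hp h1)) h2
    · exact h1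
  · intro h
    have := bigB_ge k p.1 h
    exact ⟨Or.inr h, by omega⟩

lemma mkSet_injOn (k : ℕ) : Set.InjOn (mkSet k) (Pfam k) := by
  intro p hp q hq h
  rw [Finset.mem_coe, mem_Pfam] at hp hq
  have h2 : p.2 = q.2 := by
    rw [← mkSet_inter_range hp.2.1, ← mkSet_inter_range hq.2.1, h]
  have h1 : p.1 = q.1 := by
    apply bigB_inj k
    rw [← mkSet_sdiff_range hp.2.1, ← mkSet_sdiff_range hq.2.1, h]
  exact Prod.ext h1 h2

lemma range_notmem_image (k : ℕ) : Finset.range k ∉ (Pfam k).image (mkSet k) := by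
  intro h
  simp only [Finset.mem_image] at h
  obtain ⟨p, hp, hm⟩ := h
  rw [mem_Pfam] at hp
  obtain ⟨j, hj⟩ := hp.2.2.1
  have hmem : (j+1)*(k+1) ∈ mkSet k p := by
    simp only [mkSet, Finset.mem_union]
    right
    simp only [bigB, Finset.mem_biUnion]
    exact ⟨j, hj, mem_blk_self k j⟩
  rw [hm] at hmem
  have := Finset.mem_range.mp hmem
  nlinarith

lemma card_Ffam (k : ℕ) : (Ffam k).card = (Pfam k).card + 1 := by
  rw [Ffam, Finset.card_insert_of_notMem (range_notmem_image k),
    Finset.card_image_of_injOn (mkSet_injOn k)]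

lemma mem_mkSet_iff {k x : ℕ} (hx : x < k) {p : Finset ℕ × Finset ℕ} :
    x ∈ mkSet k p ↔ x ∈ p.2 := by
  simp only [mkSet, Finset.mem_union]
  constructor
  · rintro (h | h)
    · exact h
    · exact absurd (bigB_ge k p.1 h) (by omega)
  · exact Or.inl

lemma card_filter_Ffam {k x : ℕ} (hx : x < k) :
    ((Ffam k).filter (fun A => x ∈ A)).card = ((Pfam k).filter (fun p => x ∈ p.2)).card + 1 := by
  have h1 : (Ffam k).filter (fun A => x ∈ A)
      = insert (Finset.range k) (((Pfam k).filter (fun p => x ∈ p.2)).image (mkSet k)) := by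
    rw [Ffam, Finset.filter_insert, if_pos (Finset.mem_range.mpr hx)]
    congr 1
    rw [Finset.filter_image]
    congr 1
    ext p
    simp only [Finset.mem_filter, Function.comp]
    constructor
    · rintro ⟨hp, hm⟩
      exact ⟨hp, (mem_mkSet_iff hx).mp hm⟩
    · rintro ⟨hp, hm⟩
      exact ⟨hp, (mem_mkSet_iff hx).mpr hm⟩
  rw [h1, Finset.card_insert_of_notMem, Finset.card_image_of_injOn
    ((mkSet_injOn k).mono (by intro p hp; exact Finset.mem_of_mem_filter p hp))]
  intro h
  exact range_notmem_image k (Finset.image_subset_image (Finset.filter_subset _ _) h)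

lemma sum_pow_inter (s A : Finset ℕ) :
    ∑ T ∈ s.powerset, 2 ^ (T ∩ A).card = 2 ^ (s \ A).card * 3 ^ (s ∩ A).card := by
  induction s using Finset.induction_on with
  | empty => simp
  | @insert a s ha ih =>
    have hdisj : Disjoint s.powerset (s.powerset.image (insert a)) := by
      rw [Finset.disjoint_right]
      intro T hT2 hT
      rw [Finset.mem_powerset] at hT
      simp only [Finset.mem_image] at hT2
      obtain ⟨U, hU, rfl⟩ := hT2
      exact ha (hT (Finset.mem_insert_self a U))
    have hinj : ∀ x ∈ s.powerset, ∀ y ∈ s.powerset, insert a x = insert a y → x = y := by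
      intro T hT U hU h
      rw [Finset.mem_powerset] at hT hU
      have key : ∀ V : Finset ℕ, V ⊆ s → (insert a V).erase a = V := fun V hV => by
        rw [Finset.erase_insert_eq_erase]
        exact Finset.erase_eq_of_notMem (fun hc => ha (hV hc))
      rw [← key T hT, ← key U hU, h]
    have himage : ∑ T ∈ s.powerset.image (insert a), 2 ^ (T ∩ A).card
        = ∑ T ∈ s.powerset, 2 ^ ((insert a T) ∩ A).card := Finset.sum_image hinj
    rw [Finset.powerset_insert, Finset.sum_union hdisj, himage]
    by_cases hA : a ∈ A
    · have hcard : ∀ T ∈ s.powerset, ((insert a T) ∩ A).card = (T ∩ A).card + 1 := by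
        intro T hT
        rw [Finset.mem_powerset] at hT
        rw [Finset.insert_inter_of_mem hA,
          Finset.card_insert_of_notMem (by simp; intro h; exact absurd (hT h) ha)]
      have h2 : ∑ T ∈ s.powerset, 2 ^ ((insert a T) ∩ A).card
          = 2 * ∑ T ∈ s.powerset, 2 ^ (T ∩ A).card := by
        rw [Finset.mul_sum]
        exact Finset.sum_congr rfl (fun T hT => by rw [hcard T hT]; ring)
      rw [h2, ih, Finset.insert_sdiff_of_mem _ hA, Finset.insert_inter_of_mem hA,
        Finset.card_insert_of_notMem (by simp [ha]), pow_succ]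
      ring
    · have hcard : ∀ T ∈ s.powerset, ((insert a T) ∩ A).card = (T ∩ A).card := by
        intro T _
        rw [Finset.insert_inter_of_notMem hA]
      have h2 : ∑ T ∈ s.powerset, 2 ^ ((insert a T) ∩ A).card
          = ∑ T ∈ s.powerset, 2 ^ (T ∩ A).card :=
        Finset.sum_congr rfl (fun T hT => by rw [hcard T hT])
      rw [h2, ih,
        Finset.insert_sdiff_of_notMem _ hA, Finset.insert_inter_of_notMem hA,
        Finset.card_insert_of_notMem (by simp [ha, hA]), pow_succ]
      ring

lemma range_succ_sdiff (k : ℕ) : Finset.range (k+1) \ Finset.range k = {k} := by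
  ext a; simp; omega

lemma range_succ_inter (k : ℕ) : Finset.range (k+1) ∩ Finset.range k = Finset.range k := by
  ext a; simp

lemma card_P1 (k : ℕ) : ((Pfam k).filter (fun p => p.2 ⊆ p.1)).card + 1 = 2 * 3 ^ k := by
  have heq : (Pfam k).filter (fun p => p.2 ⊆ p.1)
      = ((Finset.range (k+1)).powerset.filter (fun T => T.Nonempty)).biUnion
        (fun T => ((T ∩ Finset.range k).powerset).image (fun X => (T, X))) := by
    ext p
    simp only [Finset.mem_filter, Finset.mem_biUnion, Finset.mem_image, Finset.mem_powerset,
      mem_Pfam]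
    constructor
    · rintro ⟨⟨h1, h2, h3, _⟩, h5⟩
      exact ⟨p.1, ⟨h1, h3⟩, p.2, Finset.subset_inter h5 h2, rfl⟩
    · rintro ⟨T, ⟨hT1, hT2⟩, X, hX, rfl⟩
      have := Finset.subset_inter_iff.mp hX
      exact ⟨⟨hT1, this.2, hT2, Or.inl this.1⟩, this.1⟩
  rw [heq, Finset.card_biUnion]
  · have hfib : ∀ T ∈ (Finset.range (k+1)).powerset.filter (fun T => T.Nonempty),
        (((T ∩ Finset.range k).powerset).image (fun X => (T, X))).card
          = 2 ^ (T ∩ Finset.range k).card := by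
      intro T _
      rw [Finset.card_image_of_injective _ (fun X Y h => (Prod.mk.injEq _ _ _ _).mp h |>.2),
        Finset.card_powerset]
    rw [Finset.sum_congr rfl hfib]
    have hsplit := Finset.sum_filter_add_sum_filter_not (Finset.range (k+1)).powerset
      (fun T => T.Nonempty) (fun T => 2 ^ (T ∩ Finset.range k).card)
    have hneg : (Finset.range (k+1)).powerset.filter (fun T => ¬ T.Nonempty) = {∅} := by
      ext T
      simp [Finset.nonempty_iff_ne_empty]
      intro h; rw [h]; exact Finset.empty_subset _
    rw [hneg] at hsplit
    simp only [Finset.sum_singleton, Finset.empty_inter, Finset.card_empty, pow_zero] at hsplit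
    have htot := sum_pow_inter (Finset.range (k+1)) (Finset.range k)
    rw [range_succ_sdiff, range_succ_inter, Finset.card_singleton, Finset.card_range,
      pow_one] at htot
    omega
  · intro T hT U hU hTU
    rw [Function.onFun, Finset.disjoint_left]
    intro p hp hp2
    simp only [Finset.mem_image] at hp hp2
    obtain ⟨X, _, rfl⟩ := hp
    obtain ⟨Y, _, hY⟩ := hp2
    exact hTU ((Prod.mk.injEq _ _ _ _).mp hY.symm).1

lemma sandwich (k : ℕ) {T : Finset ℕ} (h1 : Finset.range k ⊆ T)
    (h2 : T ⊆ Finset.range (k+1)) : T = Finset.range k ∨ T = Finset.range (k+1) := by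
  by_cases hk : k ∈ T
  · right
    apply Finset.Subset.antisymm h2
    intro a ha
    rw [Finset.mem_range] at ha
    rcases Nat.lt_succ_iff_lt_or_eq.mp ha with h | h
    · exact h1 (Finset.mem_range.mpr h)
    · rwa [h]
  · left
    apply Finset.Subset.antisymm _ h1
    intro a ha
    have := Finset.mem_range.mp (h2 ha)
    rw [Finset.mem_range]
    rcases Nat.lt_succ_iff_lt_or_eq.mp this with h | h
    · exact h
    · exact absurd (h ▸ ha) hk

lemma card_P2 (k : ℕ) (hk : 3 ≤ k) :
    ((Pfam k).filter (fun p => ¬ p.2 ⊆ p.1)).card + 3 = 2 ^ (k+1) := by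
  have heq : (Pfam k).filter (fun p => ¬ p.2 ⊆ p.1)
      = ((Finset.range (k+1)).powerset.filter
          (fun T => T.Nonempty ∧ ¬ Finset.range k ⊆ T)).image
        (fun T => (T, Finset.range k)) := by
    ext p
    simp only [Finset.mem_filter, Finset.mem_image, Finset.mem_powerset, mem_Pfam]
    constructor
    · rintro ⟨⟨h1, h2, h3, h4⟩, h5⟩
      rcases h4 with h4 | h4
      · exact absurd h4 h5
      · exact ⟨p.1, ⟨h1, h3, fun hc => h5 (h4 ▸ hc)⟩, by rw [← h4]⟩
    · rintro ⟨T, ⟨hT1, hT2, hT3⟩, rfl⟩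
      exact ⟨⟨hT1, le_refl _, hT2, Or.inr rfl⟩, hT3⟩
  rw [heq, Finset.card_image_of_injective _
    (fun X Y h => ((Prod.mk.injEq _ _ _ _).mp h).1)]
  have heq2 : (Finset.range (k+1)).powerset.filter
      (fun T => T.Nonempty ∧ ¬ Finset.range k ⊆ T)
      = (Finset.range (k+1)).powerset \ {∅, Finset.range k, Finset.range (k+1)} := by
    ext T
    simp only [Finset.mem_filter, Finset.mem_sdiff, Finset.mem_insert, Finset.mem_singleton,
      Finset.mem_powerset]
    constructor
    · rintro ⟨h1, h2, h3⟩
      refine ⟨h1, ?_⟩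
      push_neg
      refine ⟨h2, ?_, ?_⟩
      · rintro rfl; exact h3 (le_refl _)
      · rintro rfl; exact h3 (by intro a ha; rw [Finset.mem_range] at ha ⊢; omega)
    · rintro ⟨h1, h2⟩
      push_neg at h2
      refine ⟨h1, h2.1, fun hc => ?_⟩
      rcases sandwich k hc h1 with h | h
      · exact h2.2.1 h
      · exact h2.2.2 h
  rw [heq2, Finset.card_sdiff_of_subset]
  · have hc3 : ({∅, Finset.range k, Finset.range (k+1)} : Finset (Finset ℕ)).card = 3 := by
      rw [Finset.card_insert_of_notMem, Finset.card_insert_of_notMem, Finset.card_singleton]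
      · simp only [Finset.mem_singleton]
        intro h
        have := Finset.card_range k ▸ Finset.card_range (k+1) ▸ congrArg Finset.card h
        omega
      · simp only [Finset.mem_insert, Finset.mem_singleton]
        push_neg
        constructor <;> intro h <;>
          [exact absurd (congrArg Finset.card h) (by simp; omega);
           exact absurd (congrArg Finset.card h) (by simp)]
    rw [hc3, Finset.card_powerset, Finset.card_range]
    have : 3 ≤ 2 ^ (k+1) := by
      calc 3 ≤ 2^2 := by norm_num
      _ ≤ 2^(k+1) := Nat.pow_le_pow_right (by norm_num) (by omega)
    omega
  · intro T hT
    simp only [Finset.mem_insert, Finset.mem_singleton] at hT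
    rw [Finset.mem_powerset]
    rcases hT with rfl | rfl | rfl
    · exact Finset.empty_subset _
    · intro a ha
      rw [Finset.mem_range] at ha ⊢
      omega
    · exact Finset.Subset.refl _

lemma card_P1x (k x : ℕ) (hx : x < k) :
    ((Pfam k).filter (fun p => x ∈ p.2 ∧ p.2 ⊆ p.1)).card = 2 * 3 ^ (k-1) := by
  have heq : (Pfam k).filter (fun p => x ∈ p.2 ∧ p.2 ⊆ p.1)
      = ((Finset.range (k+1)).powerset.filter (fun T => x ∈ T)).biUnion
        (fun T => (((T ∩ Finset.range k).erase x).powerset).image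
          (fun X => (T, insert x X))) := by
    ext p
    simp only [Finset.mem_filter, Finset.mem_biUnion, Finset.mem_image, Finset.mem_powerset,
      mem_Pfam]
    constructor
    · rintro ⟨⟨h1, h2, h3, _⟩, h5, h6⟩
      refine ⟨p.1, ⟨h1, h6 h5⟩, p.2.erase x, ?_, ?_⟩
      · exact Finset.erase_subset_erase x (Finset.subset_inter h6 h2)
      · rw [Finset.insert_erase h5]
    · rintro ⟨T, ⟨hT1, hT2⟩, X, hX, rfl⟩
      have hXsub : X ⊆ T ∩ Finset.range k :=
        hX.trans (Finset.erase_subset x _)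
      have hsub : insert x X ⊆ T ∩ Finset.range k := by
        apply Finset.insert_subset _ hXsub
        exact Finset.mem_inter.mpr ⟨hT2, Finset.mem_range.mpr hx⟩
      have := Finset.subset_inter_iff.mp hsub
      exact ⟨⟨hT1, this.2, ⟨x, hT2⟩, Or.inl this.1⟩, Finset.mem_insert_self x X, this.1⟩
  rw [heq, Finset.card_biUnion]
  · have hfib : ∀ T ∈ (Finset.range (k+1)).powerset.filter (fun T => x ∈ T),
        ((((T ∩ Finset.range k).erase x).powerset).image (fun X => (T, insert x X))).card
          = 2 ^ ((T ∩ Finset.range k).erase x).card := by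
      intro T _
      rw [Finset.card_image_of_injOn, Finset.card_powerset]
      intro X hX Y hY h
      rw [Finset.mem_coe, Finset.mem_powerset] at hX hY
      have hxX : x ∉ X := fun hc => (Finset.mem_erase.mp (hX hc)).1 rfl
      have hxY : x ∉ Y := fun hc => (Finset.mem_erase.mp (hY hc)).1 rfl
      have h2 : insert x X = insert x Y := ((Prod.mk.injEq _ _ _ _).mp h).2
      rw [← Finset.erase_insert hxX, ← Finset.erase_insert hxY, h2]
    rw [Finset.sum_congr rfl hfib]
    have heqB : (Finset.range (k+1)).powerset.filter (fun T => x ∈ T)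
        = (((Finset.range (k+1)).erase x).powerset).image (insert x) := by
      ext T
      simp only [Finset.mem_filter, Finset.mem_image, Finset.mem_powerset]
      constructor
      · rintro ⟨h1, h2⟩
        exact ⟨T.erase x, Finset.erase_subset_erase x h1, Finset.insert_erase h2⟩
      · rintro ⟨T', hT', rfl⟩
        constructor
        · apply Finset.insert_subset (Finset.mem_range.mpr (by omega))
          exact hT'.trans (Finset.erase_subset x _)
        · exact Finset.mem_insert_self x T'
    rw [heqB, Finset.sum_image]
    · have hrw : ∀ T' ∈ ((Finset.range (k+1)).erase x).powerset,
          ((insert x T' ∩ Finset.range k).erase x).card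
            = (T' ∩ (Finset.range k).erase x).card := by
        intro T' hT'
        rw [Finset.mem_powerset] at hT'
        have hxT' : x ∉ T' := fun hc => (Finset.mem_erase.mp (hT' hc)).1 rfl
        congr 1
        ext a
        simp only [Finset.mem_erase, Finset.mem_inter, Finset.mem_insert, Finset.mem_range]
        constructor
        · rintro ⟨h1, h2 | h2, h3⟩
          · exact absurd h2 h1
          · exact ⟨h2, h1, h3⟩
        · rintro ⟨h1, h2, h3⟩
          exact ⟨h2, Or.inr h1, h3⟩
      rw [Finset.sum_congr rfl (fun T' hT' => by rw [hrw T' hT']), sum_pow_inter]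
      have h1 : ((Finset.range (k+1)).erase x) \ ((Finset.range k).erase x) = {k} := by
        ext a
        simp only [Finset.mem_sdiff, Finset.mem_erase, Finset.mem_range, Finset.mem_singleton]
        omega
      have h2 : ((Finset.range (k+1)).erase x) ∩ ((Finset.range k).erase x)
          = (Finset.range k).erase x := by
        apply Finset.inter_eq_right.mpr
        apply Finset.erase_subset_erase
        intro a ha
        rw [Finset.mem_range] at ha ⊢
        omega
      rw [h1, h2, Finset.card_singleton, pow_one,
        Finset.card_erase_of_mem (Finset.mem_range.mpr hx), Finset.card_range]
    · intro T hT U hU h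
      rw [Finset.mem_coe, Finset.mem_powerset] at hT hU
      have hxT : x ∉ T := fun hc => (Finset.mem_erase.mp (hT hc)).1 rfl
      have hxU : x ∉ U := fun hc => (Finset.mem_erase.mp (hU hc)).1 rfl
      rw [← Finset.erase_insert hxT, ← Finset.erase_insert hxU, h]
  · intro T hT U hU hTU
    rw [Function.onFun, Finset.disjoint_left]
    intro p hp hp2
    simp only [Finset.mem_image] at hp hp2
    obtain ⟨X, _, rfl⟩ := hp
    obtain ⟨Y, _, hY⟩ := hp2
    exact hTU ((Prod.mk.injEq _ _ _ _).mp hY.symm).1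

lemma pow_ineq (k : ℕ) (hk : 3 ≤ k) : 2 ^ k ≤ 3 ^ (k-1) := by
  obtain ⟨m, rfl⟩ : ∃ m, k = m + 3 := ⟨k - 3, by omega⟩
  induction m with
  | zero => norm_num
  | succ n ih =>
    have ih' := ih (by omega)
    have h2 : (2:ℕ)^(n+1+3) = 2 * 2^(n+3) := by ring
    have h3 : (3:ℕ)^(n+1+3-1) = 3 * 3^(n+3-1) := by
      have h4 : n+1+3-1 = (n+3-1)+1 := by omega
      rw [h4, pow_succ]; ring
    rw [h2, h3]
    have h5 : 2 * 2^(n+3) ≤ 2 * 3^(n+3-1) := by omega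
    have h6 : 2 * 3^(n+3-1) ≤ 3 * 3^(n+3-1) := by omega
    omega

lemma filter_neg_eq (k x : ℕ) (hx : x < k) :
    (Pfam k).filter (fun p => x ∈ p.2 ∧ ¬ p.2 ⊆ p.1)
      = (Pfam k).filter (fun p => ¬ p.2 ⊆ p.1) := by
  ext p
  simp only [Finset.mem_filter, mem_Pfam]
  constructor
  · rintro ⟨h1, _, h3⟩
    exact ⟨h1, h3⟩
  · rintro ⟨h1, h3⟩
    refine ⟨h1, ?_, h3⟩
    rcases h1.2.2.2 with h | h
    · exact absurd h h3
    · rw [h]; exact Finset.mem_range.mpr hx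


/-- Bruhn–Schaudt / Poonen: for every `k ≥ 3` there is a union-closed family whose
unique smallest set `S` has size `k` and in which every element of `S` has frequency
strictly less than `1/2`. -/
theorem smallest_set_low_frequency (k : ℕ) (hk : 3 ≤ k) :
    ∃ F : Finset (Finset ℕ), F.Nonempty ∧ UnionClosed F ∧
      ∃ S ∈ F, S.card = k ∧ (∀ A ∈ F, A ≠ S → S.card < A.card) ∧
        ∀ x ∈ S, 2 * (F.filter (fun A => x ∈ A)).card < F.card := by
  refine ⟨Ffam k, ⟨Finset.range k, Finset.mem_insert_self _ _⟩, unionClosed_Ffam k,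
    Finset.range k, Finset.mem_insert_self _ _, Finset.card_range k, ?_, ?_⟩
  · intro A hA hne
    rw [Ffam, Finset.mem_insert] at hA
    rcases hA with rfl | hA
    · exact absurd rfl hne
    · simp only [Finset.mem_image] at hA
      obtain ⟨p, hp, rfl⟩ := hA
      rw [mem_Pfam] at hp
      obtain ⟨j, hj⟩ := hp.2.2.1
      have hsub : blk k j ⊆ mkSet k p := by
        intro a ha
        simp only [mkSet, Finset.mem_union, bigB, Finset.mem_biUnion]
        exact Or.inr ⟨j, hj, ha⟩
      calc (Finset.range k).card = k := Finset.card_range k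
        _ < k + 1 := by omega
        _ = (blk k j).card := (blk_card k j).symm
        _ ≤ (mkSet k p).card := Finset.card_le_card hsub
  · intro x hxmem
    have hx : x < k := Finset.mem_range.mp hxmem
    rw [card_filter_Ffam hx, card_Ffam]
    -- split Pfam
    have hsplit : ((Pfam k).filter (fun p => p.2 ⊆ p.1)).card
        + ((Pfam k).filter (fun p => ¬ p.2 ⊆ p.1)).card = (Pfam k).card :=
      Finset.card_filter_add_card_filter_not _
    have hsplitx : ((Pfam k).filter (fun p => x ∈ p.2 ∧ p.2 ⊆ p.1)).card
        + ((Pfam k).filter (fun p => x ∈ p.2 ∧ ¬ p.2 ⊆ p.1)).card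
        = ((Pfam k).filter (fun p => x ∈ p.2)).card := by
      have h1 : ((Pfam k).filter (fun p => x ∈ p.2)).filter (fun p => p.2 ⊆ p.1)
          = (Pfam k).filter (fun p => x ∈ p.2 ∧ p.2 ⊆ p.1) := by
        rw [Finset.filter_filter]
      have h2 : ((Pfam k).filter (fun p => x ∈ p.2)).filter (fun p => ¬ p.2 ⊆ p.1)
          = (Pfam k).filter (fun p => x ∈ p.2 ∧ ¬ p.2 ⊆ p.1) := by
        rw [Finset.filter_filter]
      rw [← h1, ← h2]
      exact Finset.card_filter_add_card_filter_not _
    rw [filter_neg_eq k x hx] at hsplitx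
    have e1 := card_P1 k
    have e2 := card_P2 k hk
    have e3 := card_P1x k x hx
    have e4 : 3 ^ k = 3 * 3 ^ (k - 1) := by
      conv_lhs => rw [show k = (k-1) + 1 by omega]
      rw [pow_succ]; ring
    have e5 : (2:ℕ) ^ (k+1) = 2 * 2 ^ k := by rw [pow_succ]; ring
    have e6 := pow_ineq k hk
    omega
end
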